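/- arXiv:1312.6901 — 3 statements merged into one kernel-verified Lean document; each statement's English description precedes it below -/
import Mathlib

section
/- Let K ⊆ ℝ be an open set and let Ψₙ (n = 1, 2, …) and Ψ be continuous, strictly increasing real-valued functions on K such that Ψₙ(x) → Ψ(x) as n → ∞ for every x ∈ K. Suppose yₙ belongs to the range of Ψₙ for each n, y belongs to the range of Ψ, and yₙ → y. Then the (unique) preimages converge: Ψₙ⁻¹(yₙ) → Ψ⁻¹(y), i.e. the points xₙ ∈ K with Ψₙ(xₙ) = yₙ converge to the point x ∈ K with Ψ(x) = y. -/
open Filter Topology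

/-!
If `a ∈ K` lies below `x = Ψ⁻¹(y)`, then `Ψₙ(a) → Ψ(a) < y ← yₙ = Ψₙ(xₙ)`, so eventually
`Ψₙ(a) < Ψₙ(xₙ)` and hence `a < xₙ` by monotonicity of `Ψₙ`; symmetrically above `x`.
Since `K` is open, such points `a` exist arbitrarily close to `x` on both sides.
-/

section

variable {ι α β : Type*} {l : Filter ι} [LinearOrder α] [LinearOrder β] [TopologicalSpace β]
  [OrderTopology β] {K : Set α} {Ψ : ι → α → β} {x : ι → α} {u v : β}

theorem eventually_gt_of_tendsto_of_monotoneOn (hmono : ∀ i, MonotoneOn (Ψ i) K)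
    (hxK : ∀ i, x i ∈ K) {a : α} (ha : a ∈ K) (hu : Tendsto (fun i => Ψ i a) l (𝓝 u))
    (hv : Tendsto (fun i => Ψ i (x i)) l (𝓝 v)) (huv : u < v) : ∀ᶠ i in l, a < x i := by
  filter_upwards [hu.eventually_lt hv huv] with i hi
  exact lt_of_not_ge fun h => hi.not_ge (hmono i (hxK i) ha h)

theorem eventually_lt_of_tendsto_of_monotoneOn (hmono : ∀ i, MonotoneOn (Ψ i) K)
    (hxK : ∀ i, x i ∈ K) {b : α} (hb : b ∈ K) (hu : Tendsto (fun i => Ψ i (x i)) l (𝓝 u))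
    (hv : Tendsto (fun i => Ψ i b) l (𝓝 v)) (huv : u < v) : ∀ᶠ i in l, x i < b := by
  filter_upwards [hu.eventually_lt hv huv] with i hi
  exact lt_of_not_ge fun h => hi.not_ge (hmono i hb (hxK i) h)

end

theorem tendsto_nhds_of_eventually_between_of_mem_nhds {ι α : Type*} {l : Filter ι}
    [LinearOrder α] [TopologicalSpace α] [OrderTopology α] [DenselyOrdered α] [NoMinOrder α]
    [NoMaxOrder α] {K : Set α} {c : α} (hK : K ∈ 𝓝 c) {x : ι → α}
    (hlow : ∀ a ∈ K, a < c → ∀ᶠ i in l, a < x i)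
    (hup : ∀ b ∈ K, c < b → ∀ᶠ i in l, x i < b) : Tendsto x l (𝓝 c) := by
  refine tendsto_order.2 ⟨fun a' ha' => ?_, fun b' hb' => ?_⟩
  · obtain ⟨l₀, hl₀, hIoc⟩ := exists_Ioc_subset_of_mem_nhds hK (exists_lt c)
    obtain ⟨a, hmax, hac⟩ := exists_between (max_lt ha' hl₀)
    filter_upwards [hlow a (hIoc ⟨(le_max_right _ _).trans_lt hmax, hac.le⟩) hac] with i hi
    exact ((le_max_left _ _).trans_lt hmax).trans hi
  · obtain ⟨u₀, hu₀, hIco⟩ := exists_Ico_subset_of_mem_nhds hK (exists_gt c)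
    obtain ⟨b, hcb, hmin⟩ := exists_between (lt_min hb' hu₀)
    filter_upwards [hup b (hIco ⟨hcb.le, hmin.trans_le (min_le_right _ _)⟩) hcb] with i hi
    exact hi.trans (hmin.trans_le (min_le_left _ _))

theorem inverse_convergence_of_strictMono_general
    (K : Set ℝ) (hK : IsOpen K)
    (Ψ : ℕ → ℝ → ℝ) (Ψlim : ℝ → ℝ)
    (hmono : ∀ n, StrictMonoOn (Ψ n) K)
    (hmonolim : StrictMonoOn Ψlim K)
    (hconv : ∀ z ∈ K, Tendsto (fun n => Ψ n z) atTop (𝓝 (Ψlim z)))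
    (x : ℕ → ℝ) (hxK : ∀ n, x n ∈ K)
    (xlim : ℝ) (hxlimK : xlim ∈ K)
    (y : ℕ → ℝ) (hy : ∀ n, Ψ n (x n) = y n)
    (ylim : ℝ) (hylim : Ψlim xlim = ylim)
    (hyconv : Tendsto y atTop (𝓝 ylim)) :
    Tendsto x atTop (𝓝 xlim) := by
  have hmono' : ∀ n, MonotoneOn (Ψ n) K := fun n => (hmono n).monotoneOn
  have hΨx : Tendsto (fun n => Ψ n (x n)) atTop (𝓝 (Ψlim xlim)) := by
    simpa only [hy, hylim] using hyconv
  refine tendsto_nhds_of_eventually_between_of_mem_nhds (hK.mem_nhds hxlimK) ?_ ?_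
  · intro a ha hax
    exact eventually_gt_of_tendsto_of_monotoneOn hmono' hxK ha (hconv a ha) hΨx
      (hmonolim ha hxlimK hax)
  · intro b hb hxb
    exact eventually_lt_of_tendsto_of_monotoneOn hmono' hxK hb hΨx (hconv b hb)
      (hmonolim hxlimK hb hxb)

/-- If continuous strictly increasing functions `Ψₙ` on an open set `K ⊆ ℝ` converge
pointwise to a continuous strictly increasing function `Ψ`, `Ψₙ xₙ = yₙ`, `Ψ x = y`
and `yₙ → y`, then the preimages converge: `xₙ → x`. -/
theorem inverse_convergence_of_strictMono
    (K : Set ℝ) (hK : IsOpen K)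
    (Ψ : ℕ → ℝ → ℝ) (Ψlim : ℝ → ℝ)
    (hcont : ∀ n, ContinuousOn (Ψ n) K)
    (hmono : ∀ n, StrictMonoOn (Ψ n) K)
    (hcontlim : ContinuousOn Ψlim K)
    (hmonolim : StrictMonoOn Ψlim K)
    (hconv : ∀ z ∈ K, Tendsto (fun n => Ψ n z) atTop (𝓝 (Ψlim z)))
    (x : ℕ → ℝ) (hxK : ∀ n, x n ∈ K)
    (xlim : ℝ) (hxlimK : xlim ∈ K)
    (y : ℕ → ℝ) (hy : ∀ n, Ψ n (x n) = y n)
    (ylim : ℝ) (hylim : Ψlim xlim = ylim)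
    (hyconv : Tendsto y atTop (𝓝 ylim)) :
    Tendsto x atTop (𝓝 xlim) :=
  inverse_convergence_of_strictMono_general K hK Ψ Ψlim hmono hmonolim hconv x hxK xlim hxlimK y hy
    ylim hylim hyconv
end

section
/- For all integers n, n' and every real β, Re ∫₀¹ (e^{2i((n+1)π−β)s} − e^{2i(nπ−β)s})·(e^{−2i((n'+1)π−β)s} − e^{−2i(n'π−β)s}) ds = (1/π)·∫₀^{2π} cos((n−n')θ)·(1 − cos θ) dθ. In particular the left-hand side does not depend on β and equals 2 if n = n', −1 if |n − n'| = 1, and 0 if |n − n'| ≥ 2. -/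
/-!
Multiplying out, `β` cancels and the integrand is `2 (1 - cos 2πs) e^{2πi(n-n')s}`, whose real
part is `2 cos(2π(n-n')s) (1 - cos 2πs)`; the substitution `θ = 2πs` gives the integral form.
Writing `cos(mθ)(1 - cos θ) = cos mθ - (cos (m+1)θ + cos (m-1)θ)/2` and using that
`∫₀^{2π} cos kθ dθ` vanishes unless `k = 0` yields the values `2`, `-1`, `0`.
-/

open Real Complex intervalIntegral

lemma exp_sub_exp_mul_exp_sub_exp (x y β s : ℝ) :
    (cexp (2 * I * ((x + 1) * π - β) * s) - cexp (2 * I * (x * π - β) * s))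
      * (cexp (-2 * I * ((y + 1) * π - β) * s) - cexp (-2 * I * (y * π - β) * s))
    = (2 * (1 - Real.cos (2 * π * s)) : ℝ) * cexp (((x - y) * (2 * π * s) : ℝ) * I) := by
  push_cast
  rw [mul_sub (2 : ℂ), mul_one, Complex.two_cos]
  simp only [sub_mul, mul_sub, add_mul, ← Complex.exp_add]
  ring_nf

lemma re_integral_exp_sub_exp_mul_exp_sub_exp (x y β : ℝ) :
    (∫ s in (0:ℝ)..1,
        (cexp (2 * I * ((x + 1) * π - β) * s) - cexp (2 * I * (x * π - β) * s))
          * (cexp (-2 * I * ((y + 1) * π - β) * s) - cexp (-2 * I * (y * π - β) * s))).re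
      = 1 / π * ∫ θ in (0:ℝ)..(2 * π), Real.cos ((x - y) * θ) * (1 - Real.cos θ) := by
  simp_rw [exp_sub_exp_mul_exp_sub_exp x y β]
  rw [← reCLM_apply, ← ContinuousLinearMap.intervalIntegral_comp_comm _
    ((by fun_prop : Continuous _).intervalIntegrable _ _)]
  have re_integrand : ∀ s : ℝ,
      reCLM ((2 * (1 - Real.cos (2 * π * s)) : ℝ) * cexp (((x - y) * (2 * π * s) : ℝ) * I))
        = 2 * (Real.cos ((x - y) * (2 * π * s)) * (1 - Real.cos (2 * π * s))) := by
    intro s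
    rw [reCLM_apply, re_ofReal_mul, exp_ofReal_mul_I_re]
    ring
  simp_rw [re_integrand, integral_const_mul,
    integral_comp_mul_left (fun θ => Real.cos ((x - y) * θ) * (1 - Real.cos θ))
      (mul_ne_zero two_ne_zero pi_ne_zero)]
  rw [mul_zero, mul_one, smul_eq_mul, ← mul_assoc]
  congr 1
  field_simp

lemma integral_cos_int_mul (k : ℤ) :
    ∫ θ in (0:ℝ)..(2 * π), Real.cos (k * θ) = if k = 0 then 2 * π else 0 := by
  split_ifs with hk
  · simp [hk]
  · have hk' : (k : ℝ) ≠ 0 := Int.cast_ne_zero.mpr hk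
    rw [integral_comp_mul_left (fun x => Real.cos x) hk', integral_cos,
      show (k : ℝ) * (2 * π) = (2 * k : ℤ) * π by push_cast; ring, Real.sin_int_mul_pi]
    simp

lemma one_div_pi_mul_integral_cos_int_mul_mul_one_sub_cos (m : ℤ) :
    1 / π * ∫ θ in (0:ℝ)..(2 * π), Real.cos (m * θ) * (1 - Real.cos θ)
      = if m = 0 then 2 else if |m| = 1 then -1 else 0 := by
  have product_to_sum : ∀ θ : ℝ, Real.cos (m * θ) * (1 - Real.cos θ)
      = Real.cos (m * θ)
        - (Real.cos ((m + 1 : ℤ) * θ) + Real.cos ((m - 1 : ℤ) * θ)) / 2 := by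
    intro θ
    push_cast
    rw [add_mul, sub_mul, one_mul, Real.cos_add, Real.cos_sub]
    ring
  have hint : ∀ k : ℤ,
      IntervalIntegrable (fun θ => Real.cos (k * θ)) MeasureTheory.volume 0 (2 * π) :=
    fun k => (by fun_prop : Continuous _).intervalIntegrable _ _
  simp_rw [product_to_sum]
  rw [integral_sub (hint m) (((hint _).add (hint _)).div_const 2), integral_div,
    integral_add (hint _) (hint _), integral_cos_int_mul, integral_cos_int_mul,
    integral_cos_int_mul]
  simp only [abs_eq (zero_le_one' ℤ)]
  split_ifs <;> first | omega | (field_simp; ring)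

/-- The real part of the complex covariance integral appearing in the second limit
theorem equals `(1/π) ∫₀^{2π} cos((n-n')θ)(1-cos θ) dθ`, independently of `β`; in
particular it equals `2` if `n = n'`, `-1` if `|n - n'| = 1`, and `0` if `|n - n'| ≥ 2`. -/
theorem covariance_complex_integral (n n' : ℤ) (β : ℝ) :
    (∫ s in (0:ℝ)..1,
        (Complex.exp (2 * Complex.I * (((n : ℂ) + 1) * Real.pi - (β : ℂ)) * (s : ℂ))
          - Complex.exp (2 * Complex.I * ((n : ℂ) * Real.pi - (β : ℂ)) * (s : ℂ)))
        * (Complex.exp (-2 * Complex.I * (((n' : ℂ) + 1) * Real.pi - (β : ℂ)) * (s : ℂ))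
          - Complex.exp (-2 * Complex.I * ((n' : ℂ) * Real.pi - (β : ℂ)) * (s : ℂ)))).re
      = (1 / Real.pi) * ∫ θ in (0:ℝ)..(2 * Real.pi),
          Real.cos ((n - n') * θ) * (1 - Real.cos θ) ∧
    (n = n' →
      (∫ s in (0:ℝ)..1,
        (Complex.exp (2 * Complex.I * (((n : ℂ) + 1) * Real.pi - (β : ℂ)) * (s : ℂ))
          - Complex.exp (2 * Complex.I * ((n : ℂ) * Real.pi - (β : ℂ)) * (s : ℂ)))
        * (Complex.exp (-2 * Complex.I * (((n' : ℂ) + 1) * Real.pi - (β : ℂ)) * (s : ℂ))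
          - Complex.exp (-2 * Complex.I * ((n' : ℂ) * Real.pi - (β : ℂ)) * (s : ℂ)))).re = 2) ∧
    (|n - n'| = 1 →
      (∫ s in (0:ℝ)..1,
        (Complex.exp (2 * Complex.I * (((n : ℂ) + 1) * Real.pi - (β : ℂ)) * (s : ℂ))
          - Complex.exp (2 * Complex.I * ((n : ℂ) * Real.pi - (β : ℂ)) * (s : ℂ)))
        * (Complex.exp (-2 * Complex.I * (((n' : ℂ) + 1) * Real.pi - (β : ℂ)) * (s : ℂ))
          - Complex.exp (-2 * Complex.I * ((n' : ℂ) * Real.pi - (β : ℂ)) * (s : ℂ)))).re = -1) ∧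
    (2 ≤ |n - n'| →
      (∫ s in (0:ℝ)..1,
        (Complex.exp (2 * Complex.I * (((n : ℂ) + 1) * Real.pi - (β : ℂ)) * (s : ℂ))
          - Complex.exp (2 * Complex.I * ((n : ℂ) * Real.pi - (β : ℂ)) * (s : ℂ)))
        * (Complex.exp (-2 * Complex.I * (((n' : ℂ) + 1) * Real.pi - (β : ℂ)) * (s : ℂ))
          - Complex.exp (-2 * Complex.I * ((n' : ℂ) * Real.pi - (β : ℂ)) * (s : ℂ)))).re = 0) := by
  have hre := re_integral_exp_sub_exp_mul_exp_sub_exp n n' β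
  have hval := one_div_pi_mul_integral_cos_int_mul_mul_one_sub_cos (n - n')
  push_cast at hre hval
  rw [hre, hval]
  refine ⟨rfl, fun h => ?_, fun h => ?_, fun h => ?_⟩
  · rw [if_pos (sub_eq_zero.mpr h)]
  · rw [if_neg (by rintro h0; simp [h0] at h), if_pos h]
  · rw [if_neg (by rintro h0; simp [h0] at h), if_neg (by omega)]
end

section
/- Let T > 0, C ∈ ℂ, and let f : [0,T] → ℝ and g, ρ : [0,T] → ℂ be continuous. Suppose ρ satisfies the Volterra integral equation ρ(t) = 1 + C·∫₀ᵗ f(u)·ρ(u) du + g(t) for all t ∈ [0,T]. Then for all t ∈ [0,T], ρ(t) = 1 + C·∫₀ᵗ (f(s) + f(s)·g(s))·exp(C·∫ₛᵗ f(u) du) ds + g(t); equivalently, ρ(t) = exp(C·∫₀ᵗ f(u) du) + C·∫₀ᵗ f(s)·g(s)·exp(C·∫ₛᵗ f(u) du) ds + g(t). -/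
/-!
Setting `y(t) = ∫₀ᵗ f ρ`, the Volterra equation turns into the linear ODE
`y' = C f y + f (1 + g)` with `y(0) = 0`, and also `w = 1 + C y` solves `w' = C f w + C f g` with
`w(0) = 1`. Both representations are the variation-of-constants formula for these ODEs, proved with
the integrating factor `exp (-C ∫₀ᵗ f)`.
-/

open Set intervalIntegral

theorem hasDerivWithinAt_integral_Icc {E : Type*} [NormedAddCommGroup E] [NormedSpace ℝ E]
    [CompleteSpace E] {φ : ℝ → E} {a b x : ℝ} (hφ : ContinuousOn φ (Icc a b))
    (hx : x ∈ Icc a b) :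
    HasDerivWithinAt (fun y => ∫ u in a..y, φ u) (φ x) (Icc a b) x := by
  have : Fact (x ∈ Icc a b) := ⟨hx⟩
  exact integral_hasDerivWithinAt_right
    (hφ.mono (uIcc_subset_Icc (left_mem_Icc.2 (hx.1.trans hx.2)) hx)).intervalIntegrable
    (hφ.stronglyMeasurableAtFilter_nhdsWithin measurableSet_Icc x) (hφ x hx)

theorem eq_exp_integral_mul_add_integral_of_hasDerivWithinAt {k h y : ℝ → ℂ} {a b : ℝ}
    (hab : a ≤ b) (hk : ContinuousOn k (Icc a b)) (hh : ContinuousOn h (Icc a b))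
    (hy : ∀ x ∈ Icc a b, HasDerivWithinAt y (k x * y x + h x) (Icc a b) x) :
    y b = Complex.exp (∫ u in a..b, k u) * y a
      + ∫ s in a..b, h s * Complex.exp (∫ u in s..b, k u) := by
  set K : ℝ → ℂ := fun x => ∫ u in a..x, k u
  have hE : ∀ x ∈ Icc a b, HasDerivWithinAt (fun x => Complex.exp (-K x))
      (Complex.exp (-K x) * -k x) (Icc a b) x := fun x hx =>
    (hasDerivWithinAt_integral_Icc hk hx).neg.cexp
  have hz : ∀ x ∈ Icc a b, HasDerivWithinAt (fun x => Complex.exp (-K x) * y x)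
      (h x * Complex.exp (-K x)) (Icc a b) x := fun x hx =>
    ((hE x hx).mul (hy x hx)).congr_deriv (by ring)
  have hftc : Complex.exp (-K b) * y b = y a + ∫ s in a..b, h s * Complex.exp (-K s) := by
    rw [integral_eq_sub_of_hasDerivAt_of_le hab (fun x hx => (hz x hx).continuousWithinAt)
      (fun x hx => (hz x (Ioo_subset_Icc_self hx)).hasDerivAt (Icc_mem_nhds hx.1 hx.2))
      ((hh.mul fun x hx => (hE x hx).continuousWithinAt).intervalIntegrable_of_Icc hab)]
    simp [K]
  have hK : ∀ s ∈ uIcc a b, ∫ u in s..b, k u = K b - K s := fun s hs =>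
    have hs' : s ∈ Icc a b := uIcc_of_le hab ▸ hs
    (integral_interval_sub_left
      (hk.mono (uIcc_subset_Icc (left_mem_Icc.2 hab) (right_mem_Icc.2 hab))).intervalIntegrable
      (hk.mono (uIcc_subset_Icc (left_mem_Icc.2 hab) hs')).intervalIntegrable).symm
  calc y b = Complex.exp (K b) * (Complex.exp (-K b) * y b) := by
        rw [← mul_assoc, ← Complex.exp_add, add_neg_cancel, Complex.exp_zero, one_mul]
    _ = _ := by
        rw [hftc, mul_add, ← integral_const_mul]
        congr 1
        refine integral_congr fun s hs => ?_
        simp only [hK s hs, sub_eq_add_neg, Complex.exp_add]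
        ring

theorem volterra_variation_of_constants_general
    (T : ℝ) (C : ℂ)
    (f : ℝ → ℝ) (g ρ : ℝ → ℂ)
    (hf : ContinuousOn f (Set.Icc 0 T))
    (hg : ContinuousOn g (Set.Icc 0 T))
    (hρ : ContinuousOn ρ (Set.Icc 0 T))
    (heq : ∀ t ∈ Set.Icc (0:ℝ) T,
      ρ t = 1 + C * (∫ u in (0:ℝ)..t, (f u : ℂ) * ρ u) + g t) :
    ∀ t ∈ Set.Icc (0:ℝ) T,
      ρ t = 1 + C * (∫ s in (0:ℝ)..t,
          ((f s : ℂ) + (f s : ℂ) * g s) * Complex.exp (C * ((∫ u in s..t, f u : ℝ) : ℂ)))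
        + g t ∧
      ρ t = Complex.exp (C * ((∫ u in (0:ℝ)..t, f u : ℝ) : ℂ))
        + C * (∫ s in (0:ℝ)..t,
            (f s : ℂ) * g s * Complex.exp (C * ((∫ u in s..t, f u : ℝ) : ℂ)))
        + g t := by
  intro t ht
  have hsub : Icc 0 t ⊆ Icc 0 T := Icc_subset_Icc le_rfl ht.2
  have hfC : ContinuousOn (fun u => (f u : ℂ)) (Icc 0 t) :=
    Complex.continuous_ofReal.comp_continuousOn (hf.mono hsub)
  have hfg : ContinuousOn (fun u => (f u : ℂ) * g u) (Icc 0 t) := hfC.mul (hg.mono hsub)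
  have hk : ContinuousOn (fun u => C * (f u : ℂ)) (Icc 0 t) := continuousOn_const.mul hfC
  have hCf : ∀ s, ∫ u in s..t, C * (f u : ℂ) = C * ((∫ u in s..t, f u : ℝ) : ℂ) := fun s => by
    rw [integral_const_mul, integral_ofReal]
  have hy : ∀ x ∈ Icc 0 t, HasDerivWithinAt (fun x => ∫ u in (0:ℝ)..x, (f u : ℂ) * ρ u)
      ((f x : ℂ) * ρ x) (Icc 0 t) x :=
    fun x => hasDerivWithinAt_integral_Icc (hfC.mul (hρ.mono hsub))
  have hy_eq := eq_exp_integral_mul_add_integral_of_hasDerivWithinAt ht.1 hk (hfC.add hfg)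
    (h := fun u => (f u : ℂ) + f u * g u)
    fun x hx => (hy x hx).congr_deriv (by rw [heq x (hsub hx)]; ring)
  have hw_eq := eq_exp_integral_mul_add_integral_of_hasDerivWithinAt ht.1 hk
    (continuousOn_const.mul hfg) (h := fun u => C * ((f u : ℂ) * g u))
    fun x hx => (((hy x hx).const_mul C).const_add 1).congr_deriv (by rw [heq x (hsub hx)]; ring)
  simp only [integral_same, mul_zero, add_zero, zero_add, mul_one, hCf, mul_assoc C,
    integral_const_mul] at hy_eq hw_eq
  rw [heq t ht]
  exact ⟨by rw [hy_eq], by rw [hw_eq]⟩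

/-- Variation-of-constants representation for a linear Volterra integral equation:
if `ρ(t) = 1 + C ∫₀ᵗ f ρ + g(t)` on `[0, T]` with continuous data, then
`ρ(t) = 1 + C ∫₀ᵗ (f + f g)(s) exp(C ∫ₛᵗ f) ds + g(t)`, equivalently
`ρ(t) = exp(C ∫₀ᵗ f) + C ∫₀ᵗ f(s) g(s) exp(C ∫ₛᵗ f) ds + g(t)`. -/
theorem volterra_variation_of_constants
    (T : ℝ) (hT : 0 < T) (C : ℂ)
    (f : ℝ → ℝ) (g ρ : ℝ → ℂ)
    (hf : ContinuousOn f (Set.Icc 0 T))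
    (hg : ContinuousOn g (Set.Icc 0 T))
    (hρ : ContinuousOn ρ (Set.Icc 0 T))
    (heq : ∀ t ∈ Set.Icc (0:ℝ) T,
      ρ t = 1 + C * (∫ u in (0:ℝ)..t, (f u : ℂ) * ρ u) + g t) :
    ∀ t ∈ Set.Icc (0:ℝ) T,
      ρ t = 1 + C * (∫ s in (0:ℝ)..t,
          ((f s : ℂ) + (f s : ℂ) * g s) * Complex.exp (C * ((∫ u in s..t, f u : ℝ) : ℂ)))
        + g t ∧
      ρ t = Complex.exp (C * ((∫ u in (0:ℝ)..t, f u : ℝ) : ℂ))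
        + C * (∫ s in (0:ℝ)..t,
            (f s : ℂ) * g s * Complex.exp (C * ((∫ u in s..t, f u : ℝ) : ℂ)))
        + g t :=
  volterra_variation_of_constants_general T C f g ρ hf hg hρ heq
end
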